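/- arXiv:2210.06737 — 4 statements merged into one kernel-verified Lean document; each statement's English description precedes it below -/
import Mathlib

section
/- Let d ≥ 1, k > 1, and let f : ℝ^d → ℝ be three times continuously differentiable with ‖D³f(x)‖ ≤ M for all x ∈ ℝ^d. Then there exists a constant C (depending only on k and M) such that for every θ ∈ ℝ^d, every unit vector w ∈ ℝ^d, and every c > 0, | f(θ) − ( −f(θ + k c w) + k² f(θ + c w) + k² f(θ − c w) − f(θ − k c w) ) / ( 2(k² − 1) ) | ≤ C c³. -/
/-!
Restricted to the line `t ↦ θ + t • w`, `f` becomes `g : ℝ → ℝ` with `|g'''| ≤ M ‖w‖³ = M`,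
so by Taylor's theorem `g t = g 0 + g' 0 t + g'' 0 t² / 2 + r t` with `|r t| ≤ M |t|³ / 6`.
The weights `-1, k², k², -1` at `kc, c, -c, -kc` sum to `2 (k² - 1)` and annihilate `t` and
`t²`, so the estimator reproduces quadratics exactly and its error is a combination of four
remainders, bounded by `M (k³ + k²) c³ / (6 (k² - 1))`.
-/

open Set
open scoped Nat

section LineRestriction

variable {E F : Type*} [NormedAddCommGroup E] [NormedSpace ℝ E]
  [NormedAddCommGroup F] [NormedSpace ℝ F]

theorem norm_iteratedDeriv_comp_add_smul_le {n : ℕ} {f : E → F} (hf : ContDiff ℝ n f)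
    (θ w : E) (t : ℝ) :
    ‖iteratedDeriv n (fun s : ℝ => f (θ + s • w)) t‖
      ≤ ‖iteratedFDeriv ℝ n f (θ + t • w)‖ * ‖w‖ ^ n := by
  set L := ContinuousLinearMap.toSpanSingleton ℝ w
  have hfθ : ContDiff ℝ n (fun x => f (θ + x)) := hf.comp (contDiff_const.add contDiff_id)
  have hcomp : (fun s : ℝ => f (θ + s • w)) = (fun x => f (θ + x)) ∘ L := rfl
  rw [← norm_iteratedFDeriv_eq_norm_iteratedDeriv, hcomp,
    L.iteratedFDeriv_comp_right hfθ t le_rfl, iteratedFDeriv_comp_add_left]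
  refine (ContinuousMultilinearMap.norm_compContinuousLinearMap_le _ _).trans_eq ?_
  simp [L, ContinuousLinearMap.norm_toSpanSingleton]

end LineRestriction

theorem abs_sub_taylor_le_of_abs_iteratedDeriv_le {g : ℝ → ℝ} {n : ℕ} {M : ℝ}
    (hg : ContDiff ℝ (n + 1) g) (hM : ∀ t, |iteratedDeriv (n + 1) g t| ≤ M) (x₀ x : ℝ) :
    |g x - ∑ i ∈ Finset.range (n + 1), iteratedDeriv i g x₀ / i ! * (x - x₀) ^ i|
      ≤ M / (n + 1)! * |x - x₀| ^ (n + 1) := by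
  rcases eq_or_ne x₀ x with rfl | hx
  · simp [Finset.sum_range_succ']
  obtain ⟨x', -, hx'⟩ := taylor_mean_remainder_lagrange_iteratedDeriv hx hg.contDiffOn
  have htaylor : taylorWithinEval g n (uIcc x₀ x) x₀ x
      = ∑ i ∈ Finset.range (n + 1), iteratedDeriv i g x₀ / i ! * (x - x₀) ^ i := by
    rw [taylor_within_apply]
    refine Finset.sum_congr rfl fun i hi => ?_
    rw [iteratedDerivWithin_eq_iteratedDeriv (uniqueDiffOn_uIcc hx) _ left_mem_uIcc,
      smul_eq_mul]
    · ring
    · exact hg.contDiffAt.of_le (by exact_mod_cast (Finset.mem_range.mp hi).le)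
  rw [← htaylor, hx', abs_div, abs_mul, abs_pow, Nat.abs_cast, div_mul_eq_mul_div]
  gcongr
  exact hM x'

noncomputable def fourPointEstimate (g : ℝ → ℝ) (k c : ℝ) : ℝ :=
  (-g (k * c) + k ^ 2 * g c + k ^ 2 * g (-c) - g (-(k * c))) / (2 * (k ^ 2 - 1))

theorem abs_sub_fourPointEstimate_le {g : ℝ → ℝ} {a b q K k c : ℝ} (hk : 1 < k) (hc : 0 ≤ c)
    (hg : ∀ t, |g t - (a + b * t + q * t ^ 2)| ≤ K * |t| ^ 3) :
    |a - fourPointEstimate g k c| ≤ K * (k ^ 3 + k ^ 2) / (k ^ 2 - 1) * c ^ 3 := by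
  set r : ℝ → ℝ := fun t => g t - (a + b * t + q * t ^ 2)
  have hk2 : 0 < k ^ 2 - 1 := by nlinarith
  have hremainder : a - fourPointEstimate g k c
      = (r (k * c) - k ^ 2 * r c - k ^ 2 * r (-c) + r (-(k * c))) / (2 * (k ^ 2 - 1)) := by
    simp only [r, fourPointEstimate]
    field_simp
    ring
  have hsum : |r (k * c) - k ^ 2 * r c - k ^ 2 * r (-c) + r (-(k * c))|
      ≤ 2 * (K * (k ^ 3 + k ^ 2)) * c ^ 3 := by
    have h₁ := abs_le.mp (hg (k * c))
    have h₂ := abs_le.mp (hg c)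
    have h₃ := abs_le.mp (hg (-c))
    have h₄ := abs_le.mp (hg (-(k * c)))
    simp only [abs_neg, abs_mul, abs_of_nonneg hc, abs_of_pos (zero_lt_one.trans hk)]
      at h₁ h₂ h₃ h₄
    rw [abs_le]
    constructor <;> nlinarith [sq_nonneg k]
  rw [hremainder, abs_div, abs_of_pos (by positivity : (0 : ℝ) < 2 * (k ^ 2 - 1))]
  calc _ ≤ 2 * (K * (k ^ 3 + k ^ 2)) * c ^ 3 / (2 * (k ^ 2 - 1)) := by gcongr
    _ = _ := by field_simp

theorem stmt_1_general (d : ℕ) (k M : ℝ) (hk : 1 < k)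
    (f : EuclideanSpace ℝ (Fin d) → ℝ) (hf : ContDiff ℝ 3 f)
    (hM : ∀ x : EuclideanSpace ℝ (Fin d), ‖iteratedFDeriv ℝ 3 f x‖ ≤ M) :
    ∃ C : ℝ, ∀ (θ w : EuclideanSpace ℝ (Fin d)) (c : ℝ), ‖w‖ = 1 → 0 < c →
      |f θ -
        (-f (θ + (k * c) • w) + k ^ 2 * f (θ + c • w) + k ^ 2 * f (θ - c • w)
          - f (θ - (k * c) • w)) / (2 * (k ^ 2 - 1))|
        ≤ C * c ^ 3 := by
  refine ⟨M / 6 * (k ^ 3 + k ^ 2) / (k ^ 2 - 1), fun θ w c hw hc => ?_⟩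
  set g : ℝ → ℝ := fun t => f (θ + t • w)
  have hg : ContDiff ℝ 3 g := hf.comp (contDiff_const.add (contDiff_id.smul contDiff_const))
  have hg₃ (t : ℝ) : |iteratedDeriv 3 g t| ≤ M :=
    calc |iteratedDeriv 3 g t| ≤ ‖iteratedFDeriv ℝ 3 f (θ + t • w)‖ * ‖w‖ ^ 3 :=
          norm_iteratedDeriv_comp_add_smul_le hf θ w t
      _ ≤ M := by simpa [hw] using hM _
  have htaylor (t : ℝ) : |g t - (g 0 + iteratedDeriv 1 g 0 * t + iteratedDeriv 2 g 0 / 2 * t ^ 2)|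
      ≤ M / 6 * |t| ^ 3 := by
    simpa [Finset.sum_range_succ, Nat.factorial, add_assoc] using
      abs_sub_taylor_le_of_abs_iteratedDeriv_le (n := 2) hg hg₃ 0 t
  have hestimate : (-f (θ + (k * c) • w) + k ^ 2 * f (θ + c • w) + k ^ 2 * f (θ - c • w)
      - f (θ - (k * c) • w)) / (2 * (k ^ 2 - 1)) = fourPointEstimate g k c := by
    simp [fourPointEstimate, g, sub_eq_add_neg]
  simpa [hestimate, g] using abs_sub_fourPointEstimate_le hk hc.le htaylor

/-- The four-point function-value estimator
`V = (−f(θ+kcw) + k² f(θ+cw) + k² f(θ−cw) − f(θ−kcw)) / (2(k²−1))`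
approximates `f(θ)` with third-order error in `c`, uniformly over `θ`, unit vectors `w`
and scales `c > 0`, when `f` is `C³` with bounded third derivative. -/
theorem stmt_1 (d : ℕ) (hd : 1 ≤ d) (k M : ℝ) (hk : 1 < k)
    (f : EuclideanSpace ℝ (Fin d) → ℝ) (hf : ContDiff ℝ 3 f)
    (hM : ∀ x : EuclideanSpace ℝ (Fin d), ‖iteratedFDeriv ℝ 3 f x‖ ≤ M) :
    ∃ C : ℝ, ∀ (θ w : EuclideanSpace ℝ (Fin d)) (c : ℝ), ‖w‖ = 1 → 0 < c →
      |f θ -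
        (-f (θ + (k * c) • w) + k ^ 2 * f (θ + c • w) + k ^ 2 * f (θ - c • w)
          - f (θ - (k * c) • w)) / (2 * (k ^ 2 - 1))|
        ≤ C * c ^ 3 :=
  stmt_1_general d k M hk f hf hM
end

section
/- Let d ≥ 1, k > 1 with k real, and let f : ℝ^d → ℝ be a polynomial function of total degree at most 3. Then for every θ ∈ ℝ^d, every w ∈ ℝ^d, and every c > 0, ( −f(θ + k c w) + k² f(θ + c w) + k² f(θ − c w) − f(θ − k c w) ) / ( 2(k² − 1) ) = f(θ). -/
open Polynomial

lemma cubic_aux (q : Polynomial ℝ) (hq : q.natDegree ≤ 3) (k c : ℝ) (hk : 1 < k) :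
    (-q.eval (k * c) + k ^ 2 * q.eval c + k ^ 2 * q.eval (-c)
      - q.eval (-(k * c))) / (2 * (k ^ 2 - 1)) = q.eval 0 := by
  have h4 : q.natDegree < 4 := by omega
  have he : ∀ t : ℝ, q.eval t = ∑ i ∈ Finset.range 4, q.coeff i * t ^ i :=
    fun t => Polynomial.eval_eq_sum_range' h4 t
  have hk2 : k ^ 2 - 1 ≠ 0 := by nlinarith
  simp only [he, Finset.sum_range_succ, Finset.sum_range_zero]
  field_simp
  ring

lemma eval_line (d : ℕ) (p : MvPolynomial (Fin d) ℝ) (hdeg : p.totalDegree ≤ 3)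
    (θ w : Fin d → ℝ) :
    ∃ q : Polynomial ℝ, q.natDegree ≤ 3 ∧
      ∀ t : ℝ, q.eval t = MvPolynomial.eval (θ + t • w) p := by
  set g : Fin d → Polynomial ℝ := fun i => Polynomial.C (θ i) + Polynomial.C (w i) * Polynomial.X
  refine ⟨MvPolynomial.aeval g p, ?_, ?_⟩
  · conv_lhs => rw [p.as_sum]
    rw [map_sum]
    refine (Polynomial.natDegree_sum_le _ _).trans ?_
    rw [Finset.fold_max_le]
    refine ⟨by omega, fun v hv => ?_⟩
    simp only [Function.comp_apply, MvPolynomial.aeval_monomial]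
    refine (Polynomial.natDegree_mul_le).trans ?_
    have h1 : (Finsupp.prod v fun i n => g i ^ n).natDegree ≤ 3 := by
      rw [Finsupp.prod]
      refine (Polynomial.natDegree_prod_le _ _).trans ?_
      refine le_trans (Finset.sum_le_sum (g := fun i => v i * 1) fun i _ => ?_) ?_
      · refine (Polynomial.natDegree_pow_le).trans (Nat.mul_le_mul_left _ ?_)
        refine (Polynomial.natDegree_add_le _ _).trans (max_le (by simp) ?_)
        exact (Polynomial.natDegree_C_mul_le _ _).trans Polynomial.natDegree_X_le
      · calc ∑ i ∈ v.support, v i * 1 = v.sum fun _ n => n := by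
              simp [Finsupp.sum]
            _ ≤ p.totalDegree := MvPolynomial.le_totalDegree hv
            _ ≤ 3 := hdeg
    simpa using h1
  · intro t
    have : (Polynomial.aeval t).comp (MvPolynomial.aeval g) =
        MvPolynomial.aeval (R := ℝ) (fun i => Polynomial.eval t (g i)) := by
      apply MvPolynomial.algHom_ext
      intro i
      simp
    have h2 := congrFun (congrArg (fun F => F.toFun) this) p
    have h3 : (fun i => Polynomial.eval t (g i)) = θ + t • w := by
      funext i; simp [g]; ring
    calc (MvPolynomial.aeval g p).eval t
        = Polynomial.aeval t (MvPolynomial.aeval g p) := by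
          simp [Polynomial.aeval_def, Polynomial.eval₂_eq_eval_map]
      _ = MvPolynomial.aeval (R := ℝ) (fun i => Polynomial.eval t (g i)) p := by
          rw [← this]; rfl
      _ = MvPolynomial.eval (θ + t • w) p := by
          rw [h3, MvPolynomial.aeval_def, MvPolynomial.eval]; rfl

/-- The four-point function-value estimator is exact on polynomial functions of
total degree at most 3. -/
theorem stmt_2 (d : ℕ) (hd : 1 ≤ d) (k : ℝ) (hk : 1 < k)
    (f : (Fin d → ℝ) → ℝ) (p : MvPolynomial (Fin d) ℝ)
    (hdeg : p.totalDegree ≤ 3) (hfp : ∀ x, f x = MvPolynomial.eval x p) :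
    ∀ (θ w : Fin d → ℝ) (c : ℝ), 0 < c →
      (-f (θ + (k * c) • w) + k ^ 2 * f (θ + c • w) + k ^ 2 * f (θ - c • w)
        - f (θ - (k * c) • w)) / (2 * (k ^ 2 - 1)) = f θ := by
  intro θ w c hc
  obtain ⟨q, hq, heq⟩ := eval_line d p hdeg θ w
  have h0 : f θ = q.eval 0 := by rw [hfp, heq 0]; simp
  have hsub : ∀ t : ℝ, θ - t • w = θ + (-t) • w := by
    intro t; funext i; simp [sub_eq_add_neg]
  rw [hfp, hfp, hfp, hfp, ← heq, ← heq, hsub c, hsub (k*c), ← heq, ← heq, h0]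
  exact cubic_aux q hq k c hk
end

section
/- Let d ≥ 1, k > 1 with k real, and let f : ℝ^d → ℝ be a polynomial function of total degree at most 4. Then for every θ ∈ ℝ^d, every w ∈ ℝ^d, and every c > 0, ( −f(θ + k c w) + k³ f(θ + c w) − k³ f(θ − c w) + f(θ − k c w) ) / ( 2 k (k² − 1) c ) = ∇f(θ) · w. -/
/-!
Restricted to the line `t ↦ θ + t • w`, a polynomial of total degree at most 4 becomes a
univariate polynomial `q` of degree at most 4 whose derivative at `0`, i.e. its coefficient
`q₁`, is `∇f(θ)·w`. In the combination `-q(kc) + k³q(c) - k³q(-c) + q(-kc)` the even-degree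
terms cancel by symmetry and the weights `-1, k³` are chosen so that the cubic terms cancel,
leaving exactly `2k(k²-1)c · q₁`.
-/

open Polynomial

theorem Polynomial.four_point_stencil_eq_mul_coeff_one {R : Type*} [CommRing R] {q : R[X]}
    (hq : q.natDegree ≤ 4) (k c : R) :
    -q.eval (k * c) + k ^ 3 * q.eval c - k ^ 3 * q.eval (-c) + q.eval (-(k * c)) =
      2 * k * (k ^ 2 - 1) * c * q.coeff 1 := by
  simp only [eval_eq_sum_range' (Nat.lt_succ_of_le hq), Finset.sum_range_succ,
    Finset.sum_range_zero]
  ring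

namespace MvPolynomial

variable {σ R : Type*} [CommSemiring R]

theorem natDegree_aeval_le_mul_totalDegree {g : σ → R[X]} {n : ℕ}
    (hg : ∀ i, (g i).natDegree ≤ n) (p : MvPolynomial σ R) :
    (aeval g p).natDegree ≤ n * p.totalDegree := by
  rw [aeval_def, eval₂_eq]
  refine natDegree_sum_le_of_forall_le _ _ fun m hm => ?_
  refine natDegree_C_mul_le _ _ |>.trans <| natDegree_prod_le _ _ |>.trans ?_
  calc ∑ i ∈ m.support, (g i ^ m i).natDegree
      ≤ ∑ i ∈ m.support, n * m i :=
        Finset.sum_le_sum fun i _ =>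
          natDegree_pow_le.trans (by rw [mul_comm]; gcongr; exact hg i)
    _ = n * m.degree := by rw [← Finset.mul_sum]; rfl
    _ ≤ n * p.totalDegree := by gcongr; exact le_totalDegree hm

noncomputable def restrictLine (p : MvPolynomial σ R) (x v : σ → R) : R[X] :=
  aeval (fun i => Polynomial.C (v i) * Polynomial.X + Polynomial.C (x i)) p

theorem eval_restrictLine (p : MvPolynomial σ R) (x v : σ → R) (t : R) :
    (p.restrictLine x v).eval t = eval (x + t • v) p := by
  induction p using MvPolynomial.induction_on with
  | C a => simp [restrictLine]
  | add p q hp hq => simp_all [restrictLine]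
  | mul_X p i hp =>
    simp_all only [restrictLine, map_mul, aeval_X, eval_X, Polynomial.eval_mul, Polynomial.eval_add,
      Polynomial.eval_C, Polynomial.eval_X, Pi.add_apply, Pi.smul_apply, smul_eq_mul]
    ring

theorem natDegree_restrictLine_le (p : MvPolynomial σ R) (x v : σ → R) :
    (p.restrictLine x v).natDegree ≤ p.totalDegree := by
  rw [restrictLine]
  simpa using natDegree_aeval_le_mul_totalDegree (n := 1) (fun _ => natDegree_linear_le) p

theorem fderiv_eval_apply_eq_coeff_restrictLine {𝕜 : Type*} [NontriviallyNormedField 𝕜]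
    [CompleteSpace 𝕜] [Fintype σ] (p : MvPolynomial σ 𝕜) (x v : σ → 𝕜) :
    fderiv 𝕜 (fun y => eval y p) x v = (p.restrictLine x v).coeff 1 := by
  have hline : HasDerivAt (fun t : 𝕜 => x + t • v) v 0 := by
    simpa using ((hasDerivAt_id (0 : 𝕜)).smul_const v).const_add x
  have hdiff : HasFDerivAt (eval · p) (fderiv 𝕜 (eval · p) x) (x + (0 : 𝕜) • v) := by
    simpa using (AnalyticOnNhd.eval_mvPolynomial p x trivial).differentiableAt.hasFDerivAt
  have hfderiv := hdiff.comp_hasDerivAt 0 hline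
  have hpoly : HasDerivAt (fun t : 𝕜 => eval (x + t • v) p)
      ((p.restrictLine x v).derivative.eval 0) 0 := by
    simpa only [eval_restrictLine] using (p.restrictLine x v).hasDerivAt 0
  rw [hfderiv.unique hpoly, ← coeff_zero_eq_eval_zero, coeff_derivative]
  simp

end MvPolynomial

theorem stmt_3_general (d : ℕ) (k : ℝ) (hk : 1 < k)
    (f : (Fin d → ℝ) → ℝ) (p : MvPolynomial (Fin d) ℝ)
    (hdeg : p.totalDegree ≤ 4) (hfp : ∀ x, f x = MvPolynomial.eval x p) :
    ∀ (θ w : Fin d → ℝ) (c : ℝ), 0 < c →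
      (-f (θ + (k * c) • w) + k ^ 3 * f (θ + c • w) - k ^ 3 * f (θ - c • w)
        + f (θ - (k * c) • w)) / (2 * k * (k ^ 2 - 1) * c) = fderiv ℝ f θ w := by
  intro θ w c hc
  obtain rfl : f = fun x => MvPolynomial.eval x p := funext hfp
  have hden : 2 * k * (k ^ 2 - 1) * c ≠ 0 := by
    have : 0 < k ^ 2 - 1 := by nlinarith
    positivity
  simp only [sub_eq_add_neg θ, ← neg_smul, ← MvPolynomial.eval_restrictLine,
    MvPolynomial.fderiv_eval_apply_eq_coeff_restrictLine]
  rw [four_point_stencil_eq_mul_coeff_one ((p.natDegree_restrictLine_le θ w).trans hdeg),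
    mul_div_cancel_left₀ _ hden]

/-- The four-point gradient estimator
`G = (−f(θ+kcw) + k³ f(θ+cw) − k³ f(θ−cw) + f(θ−kcw)) / (2k(k²−1)c)`
is exact for the directional derivative `∇f(θ)·w` on polynomial functions of
total degree at most 4. -/
theorem stmt_3 (d : ℕ) (hd : 1 ≤ d) (k : ℝ) (hk : 1 < k)
    (f : (Fin d → ℝ) → ℝ) (p : MvPolynomial (Fin d) ℝ)
    (hdeg : p.totalDegree ≤ 4) (hfp : ∀ x, f x = MvPolynomial.eval x p) :
    ∀ (θ w : Fin d → ℝ) (c : ℝ), 0 < c →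
      (-f (θ + (k * c) • w) + k ^ 3 * f (θ + c • w) - k ^ 3 * f (θ - c • w)
        + f (θ - (k * c) • w)) / (2 * k * (k ^ 2 - 1) * c) = fderiv ℝ f θ w :=
  stmt_3_general d k hk f p hdeg hfp
end

section
/- Let ν be a real number with 1/6 < ν < 1/4, let λ₀ > 4ν, let C₁, C₂ ≥ 0 be constants, and let t₀ be an integer with t₀ > λ₀. Suppose (a_t)_{t ≥ t₀} is a sequence of nonnegative real numbers satisfying a_{t+1} ≤ (1 − λ₀/t) a_t + C₁ t^{−4ν−1} + C₂ t^{2ν−2} for all integers t ≥ t₀. Then there exists a constant C > 0 such that a_t ≤ C t^{−1+2ν} for all t ≥ t₀. -/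
/-!
With `p = 2ν - 1 ∈ (-1, 0)`, both forcing terms are at most `(C₁ + C₂) t^(p-1)`, and the bound
`a_t ≤ C t^p` propagates by induction once `C (λ₀ + p) ≥ C₁ + C₂` (possible since `λ₀ + p > 0`):
the recursion gives `a_{t+1} ≤ C t^p + (C₁ + C₂ - C λ₀) t^(p-1) ≤ C (t^p + p t^(p-1))`, and the
tangent line inequality for the convex function `x ↦ x^p` bounds this by `C (t+1)^p`.
-/

open Real

theorem one_add_mul_self_le_rpow_one_add_of_nonpos {s : ℝ} (hs : -1 < s) {p : ℝ}
    (hp1 : -1 ≤ p) (hp2 : p ≤ 0) : 1 + p * s ≤ (1 + s) ^ p := by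
  have hs1 : 0 < 1 + s := by linarith
  rcases le_or_gt (1 + p * s) 0 with hneg | hpos
  · exact hneg.trans (rpow_pos_of_pos hs1 p).le
  -- Bernoulli for the exponent `-p ∈ [0, 1]`, and `(1 + p s) (1 - p s) ≤ 1`.
  have hbern : (1 + s) ^ (-p) ≤ 1 + -p * s :=
    rpow_one_add_le_one_add_mul_self hs.le (by linarith) (by linarith)
  rw [← inv_inv ((1 + s) ^ p), ← rpow_neg hs1.le, inv_eq_one_div,
    le_div_iff₀ (rpow_pos_of_pos hs1 _)]
  calc (1 + p * s) * (1 + s) ^ (-p) ≤ (1 + p * s) * (1 + -p * s) :=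
        mul_le_mul_of_nonneg_left hbern hpos.le
    _ ≤ 1 := by nlinarith [sq_nonneg (p * s)]

theorem rpow_add_mul_rpow_sub_one_le_rpow_add {x h p : ℝ} (hx : 0 < x) (hxh : 0 < x + h)
    (hp1 : -1 ≤ p) (hp2 : p ≤ 0) : x ^ p + p * h * x ^ (p - 1) ≤ (x + h) ^ p := by
  have hs : -1 < h / x := by rw [lt_div_iff₀ hx]; linarith
  calc x ^ p + p * h * x ^ (p - 1) = x ^ p * (1 + p * (h / x)) := by
        rw [rpow_sub_one hx.ne']; field_simp
    _ ≤ x ^ p * (1 + h / x) ^ p :=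
        mul_le_mul_of_nonneg_left (one_add_mul_self_le_rpow_one_add_of_nonpos hs hp1 hp2)
          (rpow_nonneg hx.le p)
    _ = (x + h) ^ p := by
        rw [← mul_rpow hx.le (by linarith), mul_add, mul_one, mul_div_cancel₀ h hx.ne']

theorem one_sub_div_mul_add_mul_rpow_sub_one_le {lam p K C x b : ℝ} (hx : 0 < x)
    (hlam : lam ≤ x) (hp1 : -1 ≤ p) (hp2 : p ≤ 0) (hC : 0 ≤ C) (hK : K ≤ C * (lam + p))
    (hb : b ≤ C * x ^ p) : (1 - lam / x) * b + K * x ^ (p - 1) ≤ C * (x + 1) ^ p := by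
  have hxp : x ^ p = x * x ^ (p - 1) := by
    rw [rpow_sub_one hx.ne']; field_simp
  have hxp1 : 0 ≤ x ^ (p - 1) := rpow_nonneg hx.le _
  have hcontr : 0 ≤ 1 - lam / x := by rw [sub_nonneg, div_le_one hx]; exact hlam
  calc (1 - lam / x) * b + K * x ^ (p - 1)
      ≤ (1 - lam / x) * (C * x ^ p) + C * (lam + p) * x ^ (p - 1) := by
        gcongr
    _ = C * (x ^ p + p * 1 * x ^ (p - 1)) := by
        rw [hxp]; field_simp; ring
    _ ≤ C * (x + 1) ^ p := by
        gcongr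
        exact rpow_add_mul_rpow_sub_one_le_rpow_add hx (by linarith) hp1 hp2

theorem le_mul_rpow_of_le_one_sub_div_mul_add {lam p K C : ℝ} {t₀ : ℕ} {a : ℕ → ℝ}
    (ht₀ : 0 < t₀) (hlam : lam ≤ t₀) (hp1 : -1 ≤ p) (hp2 : p ≤ 0) (hC : 0 ≤ C)
    (hK : K ≤ C * (lam + p)) (ha₀ : a t₀ ≤ C * (t₀ : ℝ) ^ p)
    (hrec : ∀ t : ℕ, t₀ ≤ t → a (t + 1) ≤ (1 - lam / t) * a t + K * (t : ℝ) ^ (p - 1)) :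
    ∀ t : ℕ, t₀ ≤ t → a t ≤ C * (t : ℝ) ^ p := by
  intro t ht
  induction t, ht using Nat.le_induction with
  | base => exact ha₀
  | succ t ht ih =>
    have htpos : (0 : ℝ) < t := by exact_mod_cast ht₀.trans_le ht
    have hlamt : lam ≤ t := hlam.trans (by exact_mod_cast ht)
    push_cast
    exact (hrec t ht).trans
      (one_sub_div_mul_add_mul_rpow_sub_one_le htpos hlamt hp1 hp2 hC hK ih)

theorem stmt_15_general (ν lam₀ C₁ C₂ : ℝ) (hν1 : 1 / 6 < ν) (hν2 : ν < 1 / 4)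
    (hlam : 4 * ν < lam₀) (hC₁ : 0 ≤ C₁)
    (t₀ : ℕ) (ht₀ : lam₀ < (t₀ : ℝ))
    (a : ℕ → ℝ)
    (hrec : ∀ t : ℕ, t₀ ≤ t →
      a (t + 1) ≤ (1 - lam₀ / t) * a t + C₁ * (t : ℝ) ^ (-4 * ν - 1)
        + C₂ * (t : ℝ) ^ (2 * ν - 2)) :
    ∃ C : ℝ, 0 < C ∧ ∀ t : ℕ, t₀ ≤ t → a t ≤ C * (t : ℝ) ^ (-1 + 2 * ν) := by
  set p := -1 + 2 * ν
  have ht₀pos : 0 < t₀ := by exact_mod_cast (show (0 : ℝ) < t₀ by linarith)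
  have ht₀p : 0 < (t₀ : ℝ) ^ p := rpow_pos_of_pos (by exact_mod_cast ht₀pos) p
  have hD : 0 < lam₀ + p := by linarith
  -- Both forcing terms are `O(t^(p-1))`; the bias term decays faster since `ν > 1/6`.
  have hrec' : ∀ t : ℕ, t₀ ≤ t →
      a (t + 1) ≤ (1 - lam₀ / t) * a t + (C₁ + C₂) * (t : ℝ) ^ (p - 1) := by
    intro t ht
    have ht1 : (1 : ℝ) ≤ t := by exact_mod_cast ht₀pos.trans_le ht
    have hbias : (t : ℝ) ^ (-4 * ν - 1) ≤ (t : ℝ) ^ (p - 1) :=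
      rpow_le_rpow_of_exponent_le ht1 (by linarith)
    have hvar : (t : ℝ) ^ (2 * ν - 2) = (t : ℝ) ^ (p - 1) := by congr 1; ring
    have h := hrec t ht
    rw [hvar] at h
    linarith [mul_le_mul_of_nonneg_left hbias hC₁]
  set C := max (max ((C₁ + C₂) / (lam₀ + p)) (a t₀ / (t₀ : ℝ) ^ p)) 1
  refine ⟨C, by positivity, le_mul_rpow_of_le_one_sub_div_mul_add ht₀pos ht₀.le
    (by linarith) (by linarith) (by positivity) ?_ ?_ hrec'⟩
  · rw [← div_le_iff₀ hD]
    exact (le_max_left _ _).trans (le_max_left _ _)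
  · rw [← div_le_iff₀ ht₀p]
    exact (le_max_right _ _).trans (le_max_left _ _)

/-- Deterministic recursion lemma behind the convergence-rate theorem: if `1/6 < ν < 1/4`,
`λ₀ > 4ν`, `t₀ > λ₀`, and a nonnegative sequence satisfies
`a_{t+1} ≤ (1 − λ₀/t) a_t + C₁ t^{−4ν−1} + C₂ t^{2ν−2}` for `t ≥ t₀`, then
`a_t ≤ C t^{−1+2ν}` for some `C > 0` and all `t ≥ t₀`. -/
theorem stmt_15 (ν lam₀ C₁ C₂ : ℝ) (hν1 : 1 / 6 < ν) (hν2 : ν < 1 / 4)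
    (hlam : 4 * ν < lam₀) (hC₁ : 0 ≤ C₁) (hC₂ : 0 ≤ C₂)
    (t₀ : ℕ) (ht₀ : lam₀ < (t₀ : ℝ))
    (a : ℕ → ℝ) (ha : ∀ t : ℕ, t₀ ≤ t → 0 ≤ a t)
    (hrec : ∀ t : ℕ, t₀ ≤ t →
      a (t + 1) ≤ (1 - lam₀ / t) * a t + C₁ * (t : ℝ) ^ (-4 * ν - 1)
        + C₂ * (t : ℝ) ^ (2 * ν - 2)) :
    ∃ C : ℝ, 0 < C ∧ ∀ t : ℕ, t₀ ≤ t → a t ≤ C * (t : ℝ) ^ (-1 + 2 * ν) :=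
  stmt_15_general ν lam₀ C₁ C₂ hν1 hν2 hlam hC₁ t₀ ht₀ a hrec
end
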